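/- For ω ∈ F_n let N(ω) be the number of a ∈ {1, …, n−1} such that b̃_{a-1} = 0 and b̃_a = 1. Then for every ε > 0, the conditional probability μ( (5/18 − ε)·n < N < (5/18 + ε)·n ∣ F_n ) tends to 1 as n → ∞. -/

import Mathlib

open MeasureTheory ProbabilityTheory Filter

/-- `μ` is the infinite product over `ℕ` of the uniform probability measure on
`{-1,0,1} ⊆ ℤ`, characterized by its values on cylinder sets.  (Taking `n = 0`
shows `μ` is a probability measure.) -/
def IsCDGProductMeasure (μ : Measure (ℕ → ℤ)) : Prop :=
  ∀ (n : ℕ) (c : ℕ → ℤ),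
    μ {ω : ℕ → ℤ | ∀ i < n, ω i = c i} =
      ∏ i ∈ Finset.range n,
        (if c i = -1 ∨ c i = 0 ∨ c i = 1 then (1 / 3 : ENNReal) else 0)

/-- `S n b = ∑_{i=0}^{n-1} 2^(n-1-i) b i`. -/
def cdgS (n : ℕ) (b : ℕ → ℤ) : ℤ := ∑ i ∈ Finset.range n, 2 ^ (n - 1 - i) * b i

/-- The standard form `b̃ a` of the sequence `b` for length `n`: the binary digit of
`S = ∑_{i<n} 2^(n-1-i) b i` in position `n-1-a`, so that (in the "first 1" case, where
`1 ≤ S ≤ 2^n − 1`) one has `S = ∑_{a<n} 2^(n-1-a) b̃ a` with each `b̃ a ∈ {0,1}`. -/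
def btilde (n : ℕ) (b : ℕ → ℤ) (a : ℕ) : ℕ := (cdgS n b).toNat / 2 ^ (n - 1 - a) % 2

/-- The "first 1" event `F_n` for length `n`: there is `j < n` with `b j = 1` and
`b k = 0` for all `k < j`. -/
def firstOne (n : ℕ) : Set (ℕ → ℤ) :=
  {b : ℕ → ℤ | ∃ j < n, b j = 1 ∧ ∀ k < j, b k = 0}

/-
Reading the signed digits `b_{n-1}, …, b_0` of `S` from the least significant end, the binary
digits of `S` are produced by subtraction with borrow; remembering also the previously emitted
digit, the occurrences of `01` in `b̃` are counted by a four-state automaton driven by independent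
uniform letters. The first two moments of this count over all `3^n` words satisfy linear
recursions over the states, whose explicit solutions give
`∑ (N - 5n/18)² = (n/18 + 19/216)·3^n + 7/8 - n/9`. On `F_n` the leading digit `1` clears the
final borrow, so there the automaton really computes `b̃`; as `μ F_n ≥ 1/3`, Chebyshev's
inequality bounds the conditional probability of `|N - 5n/18| ≥ εn` by `3/(ε²n)`.
-/

open MeasureTheory ProbabilityTheory Filter Finset

namespace CDG

def digitValue (j : Fin 3) : ℤ := j - 1

lemma digitValue_injective : Function.Injective digitValue := by decide

lemma digitValue_mem (j : Fin 3) :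
    digitValue j = -1 ∨ digitValue j = 0 ∨ digitValue j = 1 := by
  revert j
  decide

def outDigit : Bool → Fin 3 → Bool
  | false, j => j != 1
  | true, j => j == 1

def outBorrow : Bool → Fin 3 → Bool
  | false, j => j == 0
  | true, j => j != 2

lemma digitValue_sub_borrow (c : Bool) (j : Fin 3) :
    digitValue j - c.toNat = (outDigit c j).toNat - 2 * (outBorrow c j).toNat := by
  revert c j
  decide

/-- The pair (borrow, previously emitted digit). -/
abbrev State := Bool × Bool

def init : State := (false, false)

def step (s : State) (j : Fin 3) : State := (outBorrow s.1 j, outDigit s.1 j)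

/-- Read from the least significant end, an occurrence of `01` in `b̃` is a `1` followed by
a `0`. -/
def output (s : State) (j : Fin 3) : ℕ := (s.2 && !outDigit s.1 j).toNat

def run (s : State) (u : ℕ → Fin 3) : ℕ → State
  | 0 => s
  | t + 1 => step (run s u t) (u t)

def count (s : State) (u : ℕ → Fin 3) (n : ℕ) : ℕ :=
  ∑ t ∈ range n, output (run s u t) (u t)

lemma run_succ' (s : State) (u : ℕ → Fin 3) (t : ℕ) :
    run s u (t + 1) = run (step s (u 0)) (fun i => u (i + 1)) t := by
  induction t with
  | zero => rfl
  | succ t ih => exact congrArg (step · (u (t + 1))) ih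

lemma count_succ' (s : State) (u : ℕ → Fin 3) (n : ℕ) :
    count s u (n + 1) = output s (u 0) + count (step s (u 0)) (fun i => u (i + 1)) n := by
  simp only [count, sum_range_succ', run_succ', add_comm]
  rfl

def wordStream {n : ℕ} (w : Fin n → Fin 3) (t : ℕ) : Fin 3 :=
  if h : t < n then w ⟨t, h⟩ else 0

lemma count_wordStream_cons {n : ℕ} (s : State) (j : Fin 3) (v : Fin n → Fin 3) :
    count s (wordStream (Fin.cons j v : Fin (n + 1) → Fin 3)) (n + 1) =
      output s j + count (step s j) (wordStream v) n := by
  have hshift : (fun i => wordStream (Fin.cons j v : Fin (n + 1) → Fin 3) (i + 1)) =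
      wordStream v := by
    funext i
    by_cases h : i < n
    · simp only [wordStream, h, dif_pos, Nat.add_lt_add_iff_right]
      exact Fin.cons_succ (α := fun _ => Fin 3) j v ⟨i, h⟩
    · simp [wordStream, h]
  rw [count_succ', hshift]
  rfl

lemma sum_pi_fin_succ {M α : Type*} [AddCommMonoid M] [Fintype α] {n : ℕ}
    (f : (Fin (n + 1) → α) → M) :
    ∑ w, f w = ∑ j, ∑ v : Fin n → α, f (Fin.cons j v) := by
  rw [← Fintype.sum_equiv (Fin.consEquiv fun _ => α) _ f (fun _ => rfl), Fintype.sum_prod_type]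
  rfl

noncomputable def firstMoment (n : ℕ) (s : State) : ℝ :=
  ∑ w : Fin n → Fin 3, (count s (wordStream w) n : ℝ)

noncomputable def secondMoment (n : ℕ) (s : State) : ℝ :=
  ∑ w : Fin n → Fin 3, (count s (wordStream w) n : ℝ) ^ 2

lemma firstMoment_succ (n : ℕ) (s : State) :
    firstMoment (n + 1) s = ∑ j, ((output s j : ℝ) * 3 ^ n + firstMoment n (step s j)) := by
  simp only [firstMoment, sum_pi_fin_succ, count_wordStream_cons, Nat.cast_add, sum_add_distrib,
    sum_const, card_univ, Fintype.card_fun, Fintype.card_fin, nsmul_eq_mul, Nat.cast_pow]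
  simp only [Nat.cast_ofNat, mul_comm]

lemma secondMoment_succ (n : ℕ) (s : State) :
    secondMoment (n + 1) s = ∑ j, ((output s j : ℝ) ^ 2 * 3 ^ n +
      2 * output s j * firstMoment n (step s j) + secondMoment n (step s j)) := by
  simp only [secondMoment, firstMoment, sum_pi_fin_succ, count_wordStream_cons, Nat.cast_add,
    add_sq, sum_add_distrib, sum_const, card_univ, Fintype.card_fun, Fintype.card_fin,
    nsmul_eq_mul, Nat.cast_pow, mul_sum]
  simp only [Nat.cast_ofNat, mul_comm]

/-- Closed-form solutions of the recursions `firstMoment_succ` and `secondMoment_succ`, valid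
from `t = 1` and `t = 2` respectively. -/
noncomputable def firstMomentFormula (t : ℕ) : State → ℝ
  | (false, false) => 5/18*t*3^t - 7/36*3^t - 1/4
  | (false, true)  => 5/18*t*3^t + 5/36*3^t - 1/4
  | (true, false)  => 5/18*t*3^t - 13/36*3^t + 1/4
  | (true, true)   => 5/18*t*3^t + 11/36*3^t + 1/4

noncomputable def secondMomentFormula (t : ℕ) : State → ℝ
  | (false, false) => 25/324*t^2*3^t - 17/324*t*3^t + 19/216*3^t - 1/4*t + 7/8
  | (false, true)  => 25/324*t^2*3^t + 43/324*t*3^t + 23/216*3^t - 1/4*t + 3/8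
  | (true, false)  => 25/324*t^2*3^t - 47/324*t*3^t + 47/216*3^t + 1/4*t - 5/8
  | (true, true)   => 25/324*t^2*3^t + 73/324*t*3^t + 31/216*3^t + 1/4*t - 5/8

lemma firstMoment_zero (s : State) : firstMoment 0 s = 0 := by
  simp [firstMoment, count]

lemma secondMoment_zero (s : State) : secondMoment 0 s = 0 := by
  simp [secondMoment, count]

lemma firstMoment_eq {t : ℕ} (ht : 1 ≤ t) (s : State) :
    firstMoment t s = firstMomentFormula t s := by
  induction t, ht using Nat.le_induction generalizing s with
  | base =>
    rcases s with ⟨_ | _, _ | _⟩ <;>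
      simp [firstMoment_succ, firstMoment_zero, Fin.sum_univ_three, output, step, outDigit,
        outBorrow, firstMomentFormula] <;> norm_num
  | succ t _ ih =>
    rcases s with ⟨_ | _, _ | _⟩ <;>
      simp [firstMoment_succ, Fin.sum_univ_three, output, step, outDigit, outBorrow, ih,
        firstMomentFormula, pow_succ] <;> ring

lemma secondMoment_eq {t : ℕ} (ht : 2 ≤ t) (s : State) :
    secondMoment t s = secondMomentFormula t s := by
  induction t, ht using Nat.le_induction generalizing s with
  | base =>
    rcases s with ⟨_ | _, _ | _⟩ <;>
      simp [secondMoment_succ, firstMoment_succ, secondMoment_zero, firstMoment_zero,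
        Fin.sum_univ_three, output, step, outDigit, outBorrow, secondMomentFormula] <;> norm_num
  | succ t ht ih =>
    rcases s with ⟨_ | _, _ | _⟩ <;>
      simp [secondMoment_succ, Fin.sum_univ_three, output, step, outDigit, outBorrow, ih,
        firstMoment_eq (by omega : 1 ≤ t), firstMomentFormula, secondMomentFormula,
        pow_succ] <;> ring

lemma sum_sq_count_sub (n : ℕ) (hn : 2 ≤ n) :
    ∑ w : Fin n → Fin 3, ((count init (wordStream w) n : ℝ) - 5/18 * n) ^ 2 =
      ((n : ℝ) / 18 + 19 / 216) * 3 ^ n + 7 / 8 - n / 9 := by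
  have hexpand : ∑ w : Fin n → Fin 3, ((count init (wordStream w) n : ℝ) - 5/18 * n) ^ 2 =
      secondMoment n init - 2 * firstMoment n init * (5/18 * n) + 3 ^ n * (5/18 * n) ^ 2 := by
    simp only [secondMoment, firstMoment, sub_sq, sum_add_distrib, sum_sub_distrib, sum_const,
      card_univ, Fintype.card_fun, Fintype.card_fin, nsmul_eq_mul, Nat.cast_pow, mul_sum,
      sum_mul, Nat.cast_ofNat]
  rw [hexpand, secondMoment_eq hn, firstMoment_eq (by omega)]
  simp only [init, firstMomentFormula, secondMomentFormula]
  ring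

lemma card_le_sum_sq_div {ι : Type*} (s : Finset ι) (f : ι → ℝ) {δ : ℝ} (hδ : 0 < δ) :
    (#{x ∈ s | δ ≤ |f x|} : ℝ) ≤ (∑ x ∈ s, f x ^ 2) / δ ^ 2 := by
  rw [le_div_iff₀ (by positivity)]
  calc (#{x ∈ s | δ ≤ |f x|} : ℝ) * δ ^ 2 ≤ ∑ x ∈ s with δ ≤ |f x|, f x ^ 2 := by
        rw [← nsmul_eq_mul]
        refine card_nsmul_le_sum _ _ _ fun x hx => ?_
        rw [← sq_abs (f x)]
        exact pow_le_pow_left₀ hδ.le (mem_filter.1 hx).2 2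
    _ ≤ ∑ x ∈ s, f x ^ 2 :=
        sum_le_sum_of_subset_of_nonneg (filter_subset _ _) fun _ _ _ => sq_nonneg _

lemma card_count_deviation_le {n : ℕ} (hn : 2 ≤ n) {ε : ℝ} (hε : 0 < ε) :
    (#{w : Fin n → Fin 3 | ε * n ≤ |(count init (wordStream w) n : ℝ) - 5/18 * n|} : ℝ) ≤
      3 ^ n / (ε ^ 2 * n) := by
  have hn' : (2 : ℝ) ≤ n := by exact_mod_cast hn
  refine (card_le_sum_sq_div _ _ (by positivity)).trans ?_
  rw [sum_sq_count_sub n hn, div_le_div_iff₀ (by positivity) (by positivity)]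
  have h3 : (9 : ℝ) ≤ 3 ^ n := by
    calc (9 : ℝ) = 3 ^ 2 := by norm_num
      _ ≤ 3 ^ n := pow_le_pow_right₀ (by norm_num) hn
  nlinarith [mul_le_mul_of_nonneg_left h3 (by positivity : (0 : ℝ) ≤ n * n * ε ^ 2)]

lemma sum_two_pow_mul_div_two_pow_mod_two {g : ℕ → ℕ} (hg : ∀ t, g t ≤ 1) {k n : ℕ}
    (hk : k < n) : (∑ t ∈ range n, 2 ^ t * g t) / 2 ^ k % 2 = g k := by
  have hsplit : ∀ (g : ℕ → ℕ) (m : ℕ), ∑ t ∈ range (m + 1), 2 ^ t * g t =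
      g 0 + 2 * ∑ t ∈ range m, 2 ^ t * g (t + 1) := fun g m => by
    rw [sum_range_succ', mul_sum, add_comm]
    simp only [pow_succ, pow_zero, mul_one, mul_comm, mul_left_comm]
  obtain ⟨n, rfl⟩ : ∃ m, n = m + 1 := ⟨n - 1, by omega⟩
  induction k generalizing g n with
  | zero => rw [hsplit]; have := hg 0; omega
  | succ k ih =>
    obtain ⟨n, rfl⟩ : ∃ m, n = m + 1 := ⟨n - 1, by omega⟩
    rw [hsplit, pow_succ', ← Nat.div_div_eq_div_mul, Nat.add_mul_div_left _ _ two_pos,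
      Nat.div_eq_of_lt (show g 0 < 2 by have := hg 0; omega), zero_add]
    exact ih (fun t => hg (t + 1)) n (by omega)

def digit (u : ℕ → Fin 3) (t : ℕ) : Bool := outDigit (run init u t).1 (u t)

lemma count_init_eq_sum (u : ℕ → Fin 3) (n : ℕ) :
    count init u n =
      ∑ t ∈ Ico 1 n, if digit u (t - 1) = true ∧ digit u t = false then 1 else 0 := by
  rcases n with _ | n
  · rfl
  rw [count, range_eq_Ico, sum_eq_sum_Ico_succ_bot (Nat.succ_pos n)]
  rw [show output (run init u 0) (u 0) = 0 from rfl, zero_add]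
  refine sum_congr rfl fun t ht => ?_
  obtain ⟨t, rfl⟩ : ∃ s, t = s + 1 := ⟨t - 1, by have := (mem_Ico.1 ht).1; omega⟩
  show (digit u t && !digit u (t + 1)).toNat = _
  rw [Nat.add_sub_cancel]
  cases digit u t <;> cases digit u (t + 1) <;> rfl

lemma sum_two_pow_digitValue (u : ℕ → Fin 3) (T : ℕ) :
    ∑ t ∈ range T, 2 ^ t * digitValue (u t) =
      ∑ t ∈ range T, 2 ^ t * ((digit u t).toNat : ℤ) - 2 ^ T * (run init u T).1.toNat := by
  induction T with
  | zero => simp [run, init]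
  | succ T ih =>
    rw [sum_range_succ, sum_range_succ, ih]
    simp only [digit, run, step]
    linear_combination (2 : ℤ) ^ T * digitValue_sub_borrow (run init u T).1 (u T)

lemma run_fst_eq_false {s : State} {u : ℕ → Fin 3} {m T : ℕ} (hm : u m = 2)
    (hone : ∀ t, m < t → t < T → u t = 1) (hT : m < T) : (run s u T).1 = false := by
  induction T, hT using Nat.le_induction with
  | base =>
    show outBorrow _ (u m) = false
    rw [hm]
    cases (run s u m).1 <;> rfl
  | succ T hT ih =>
    show outBorrow (run s u T).1 (u T) = false
    rw [ih fun t h1 h2 => hone t h1 (by omega), hone T hT (by omega)]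
    rfl

/-- `w` lists the digits `ω (n - 1), …, ω 0`, least significant first. -/
def lsbCylinder (n : ℕ) (w : Fin n → Fin 3) : Set (ℕ → ℤ) :=
  {ω | ∀ i < n, ω i = digitValue (wordStream w (n - 1 - i))}

def zeroOneCount (n : ℕ) (ω : ℕ → ℤ) : ℕ :=
  #{a ∈ Ico 1 n | btilde n ω (a - 1) = 0 ∧ btilde n ω a = 1}

def deviationEvent (ε : ℝ) (n : ℕ) : Set (ℕ → ℤ) :=
  {ω | ε * n ≤ |(zeroOneCount n ω : ℝ) - 5/18 * n|}

section Bridge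

variable {n : ℕ} {w : Fin n → Fin 3} {ω : ℕ → ℤ}

lemma apply_sub_one_sub_of_mem_lsbCylinder (hω : ω ∈ lsbCylinder n w) {t : ℕ} (ht : t < n) :
    ω (n - 1 - t) = digitValue (wordStream w t) := by
  rw [hω _ (by omega), Nat.sub_sub_self (by omega)]

lemma cdgS_eq_of_mem_lsbCylinder (hω : ω ∈ lsbCylinder n w) :
    cdgS n ω = ∑ t ∈ range n, 2 ^ t * digitValue (wordStream w t) := by
  conv_rhs => rw [← sum_range_reflect]
  exact sum_congr rfl fun i hi => by rw [hω i (mem_range.1 hi)]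

/-- The first nonzero digit of `ω` is a `1`, after which the borrow is cleared for good. -/
lemma run_fst_eq_false_of_mem_firstOne (hω : ω ∈ lsbCylinder n w) (hF : ω ∈ firstOne n) :
    (run init (wordStream w) n).1 = false := by
  obtain ⟨j, hj, h1, h0⟩ := hF
  refine run_fst_eq_false (m := n - 1 - j) ?_ (fun t ht htn => ?_) (by omega)
  · apply digitValue_injective
    rw [← apply_sub_one_sub_of_mem_lsbCylinder hω (by omega), Nat.sub_sub_self (by omega), h1]
    rfl
  · apply digitValue_injective
    rw [← apply_sub_one_sub_of_mem_lsbCylinder hω htn, h0 _ (by omega)]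
    rfl

lemma cdgS_eq_sum_digit (hω : ω ∈ lsbCylinder n w) (hF : ω ∈ firstOne n) :
    cdgS n ω = ((∑ t ∈ range n, 2 ^ t * (digit (wordStream w) t).toNat : ℕ) : ℤ) := by
  rw [cdgS_eq_of_mem_lsbCylinder hω, sum_two_pow_digitValue,
    run_fst_eq_false_of_mem_firstOne hω hF]
  push_cast
  simp

lemma btilde_eq_digit (hω : ω ∈ lsbCylinder n w) (hF : ω ∈ firstOne n) {a : ℕ}
    (ha : a < n) :
    btilde n ω a = (digit (wordStream w) (n - 1 - a)).toNat := by
  rw [btilde, cdgS_eq_sum_digit hω hF, Int.toNat_natCast]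
  exact sum_two_pow_mul_div_two_pow_mod_two (fun t => Bool.toNat_le _) (by omega)

lemma zeroOneCount_eq_count (hω : ω ∈ lsbCylinder n w) (hF : ω ∈ firstOne n) :
    zeroOneCount n ω = count init (wordStream w) n := by
  set f : ℕ → ℕ := fun t =>
    if digit (wordStream w) (t - 1) = true ∧ digit (wordStream w) t = false then 1 else 0
  have hreflect : ∑ a ∈ Ico 1 n, f (n - a) = ∑ t ∈ Ico 1 n, f t := by
    simpa using sum_Ico_reflect f 1 (Nat.le_succ n)
  rw [zeroOneCount, card_filter, count_init_eq_sum, ← hreflect]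
  refine sum_congr rfl fun a ha => ?_
  rw [mem_Ico] at ha
  rw [btilde_eq_digit hω hF (by omega), btilde_eq_digit hω hF ha.2,
    show n - 1 - (a - 1) = n - a by omega]
  simp only [f, show n - a - 1 = n - 1 - a by omega]
  cases digit (wordStream w) (n - a) <;> cases digit (wordStream w) (n - 1 - a) <;> rfl

end Bridge

lemma measurableSet_lsbCylinder (n : ℕ) (w : Fin n → Fin 3) :
    MeasurableSet (lsbCylinder n w) := by
  unfold lsbCylinder
  measurability

lemma measurableSet_firstOne (n : ℕ) : MeasurableSet (firstOne n) := by
  unfold firstOne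
  measurability

lemma pairwiseDisjoint_lsbCylinder (n : ℕ) :
    (Set.univ : Set (Fin n → Fin 3)).PairwiseDisjoint (lsbCylinder n) := by
  intro v _ v' _ hne
  refine Set.disjoint_left.2 fun ω hv hv' => hne (funext fun t => ?_)
  have := (apply_sub_one_sub_of_mem_lsbCylinder hv t.2).symm.trans
    (apply_sub_one_sub_of_mem_lsbCylinder hv' t.2)
  simpa [wordStream] using digitValue_injective this

lemma tendsto_measure_nhds_one_of_compl {α ι : Type*} [MeasurableSpace α] {l : Filter ι}
    {ν : ι → Measure α} {A : ι → Set α} (hν : ∀ᶠ i in l, IsProbabilityMeasure (ν i))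
    (h : Tendsto (fun i => ν i (A i)ᶜ) l (nhds 0)) :
    Tendsto (fun i => ν i (A i)) l (nhds 1) := by
  have hlow : Tendsto (fun i => 1 - ν i (A i)ᶜ) l (nhds 1) := by
    simpa using ENNReal.Tendsto.sub tendsto_const_nhds h (Or.inl ENNReal.one_ne_top)
  refine tendsto_of_tendsto_of_tendsto_of_le_of_le' hlow tendsto_const_nhds ?_ ?_
  · filter_upwards [hν] with i hi
    rw [tsub_le_iff_right, ← measure_univ (μ := ν i)]
    exact measure_univ_le_add_compl _
  · filter_upwards [hν] with i hi
    exact prob_le_one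

section Measure

variable {μ : Measure (ℕ → ℤ)}

lemma isProbabilityMeasure_of_isCDGProductMeasure (hμ : IsCDGProductMeasure μ) :
    IsProbabilityMeasure μ :=
  ⟨by simpa using hμ 0 0⟩

lemma measure_lsbCylinder (hμ : IsCDGProductMeasure μ) {n : ℕ} (w : Fin n → Fin 3) :
    μ (lsbCylinder n w) = 3⁻¹ ^ n := by
  rw [lsbCylinder, hμ]
  simp [digitValue_mem]

lemma measure_biUnion_lsbCylinder (hμ : IsCDGProductMeasure μ) {n : ℕ}
    (s : Finset (Fin n → Fin 3)) : μ (⋃ w ∈ s, lsbCylinder n w) = #s * 3⁻¹ ^ n := by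
  rw [measure_biUnion_finset ((pairwiseDisjoint_lsbCylinder n).subset (Set.subset_univ _))
    fun w _ => measurableSet_lsbCylinder n w]
  simp [measure_lsbCylinder hμ]

lemma measure_compl_iUnion_lsbCylinder (hμ : IsCDGProductMeasure μ) (n : ℕ) :
    μ (⋃ w ∈ (univ : Finset (Fin n → Fin 3)), lsbCylinder n w)ᶜ = 0 := by
  have := isProbabilityMeasure_of_isCDGProductMeasure hμ
  rw [prob_compl_eq_zero_iff (Finset.measurableSet_biUnion _ fun w _ =>
    measurableSet_lsbCylinder n w), measure_biUnion_lsbCylinder hμ]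
  simp [← mul_pow, ENNReal.mul_inv_cancel]

lemma inv_three_le_measure_firstOne (hμ : IsCDGProductMeasure μ) {n : ℕ} (hn : 0 < n) :
    3⁻¹ ≤ μ (firstOne n) :=
  calc 3⁻¹ = μ {ω : ℕ → ℤ | ∀ i < 1, ω i = 1} := by rw [hμ]; simp
    _ ≤ μ (firstOne n) :=
      measure_mono fun ω hω =>
        ⟨0, hn, hω 0 one_pos, fun k hk => absurd hk (Nat.not_lt_zero k)⟩

lemma isProbabilityMeasure_cond_firstOne (hμ : IsCDGProductMeasure μ) {n : ℕ} (hn : 0 < n) :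
    IsProbabilityMeasure μ[|firstOne n] :=
  have := isProbabilityMeasure_of_isCDGProductMeasure hμ
  cond_isProbabilityMeasure
    (lt_of_lt_of_le (by norm_num) (inv_three_le_measure_firstOne hμ hn)).ne'

lemma measure_firstOne_inter_deviation_le (hμ : IsCDGProductMeasure μ) {ε : ℝ} (hε : 0 < ε)
    {n : ℕ} (hn : 2 ≤ n) :
    μ (firstOne n ∩ deviationEvent ε n) ≤ ENNReal.ofReal (1 / ε ^ 2 / n) := by
  set bad : Finset (Fin n → Fin 3) :=
    {w | ε * n ≤ |(count init (wordStream w) n : ℝ) - 5/18 * n|}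
  set cover := ⋃ w ∈ (univ : Finset (Fin n → Fin 3)), lsbCylinder n w
  have hsub :
      firstOne n ∩ deviationEvent ε n ⊆ coverᶜ ∪ ⋃ w ∈ bad, lsbCylinder n w := by
    rintro ω ⟨hF, hdev⟩
    by_cases hω : ω ∈ cover
    · obtain ⟨w, -, hw⟩ := Set.mem_iUnion₂.1 hω
      refine Or.inr (Set.mem_biUnion (mem_filter.2 ⟨mem_univ _, ?_⟩) hw)
      rwa [← zeroOneCount_eq_count hw hF]
    · exact Or.inl hω
  have hbad : (#bad : ℝ) * 3⁻¹ ^ n ≤ 1 / ε ^ 2 / n := by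
    rw [inv_pow, ← div_eq_mul_inv, div_le_iff₀ (by positivity)]
    refine (card_count_deviation_le hn hε).trans_eq ?_
    field_simp
  calc _ ≤ μ coverᶜ + μ (⋃ w ∈ bad, lsbCylinder n w) :=
        (measure_mono hsub).trans (measure_union_le _ _)
    _ = #bad * 3⁻¹ ^ n := by
        rw [measure_compl_iUnion_lsbCylinder hμ, zero_add, measure_biUnion_lsbCylinder hμ]
    _ = ENNReal.ofReal (#bad * 3⁻¹ ^ n) := by
        rw [ENNReal.ofReal_mul (Nat.cast_nonneg _), ENNReal.ofReal_natCast, ENNReal.ofReal_pow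
          (by norm_num), ENNReal.ofReal_inv_of_pos (by norm_num), ENNReal.ofReal_ofNat]
    _ ≤ _ := ENNReal.ofReal_le_ofReal hbad

lemma cond_deviation_le (hμ : IsCDGProductMeasure μ) {ε : ℝ} (hε : 0 < ε) {n : ℕ}
    (hn : 2 ≤ n) :
    μ[deviationEvent ε n | firstOne n] ≤ 3 * ENNReal.ofReal (1 / ε ^ 2 / n) := by
  rw [cond_apply (measurableSet_firstOne n)]
  refine mul_le_mul' ?_ (measure_firstOne_inter_deviation_le hμ hε hn)
  rw [ENNReal.inv_le_iff_inv_le]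
  exact inv_three_le_measure_firstOne hμ (by omega)

lemma tendsto_cond_deviation (hμ : IsCDGProductMeasure μ) {ε : ℝ} (hε : 0 < ε) :
    Tendsto (fun n : ℕ => μ[deviationEvent ε n | firstOne n]) atTop (nhds 0) := by
  have hbound : Tendsto (fun n : ℕ => 3 * ENNReal.ofReal (1 / ε ^ 2 / n)) atTop (nhds 0) := by
    have h := ENNReal.Tendsto.const_mul (a := 3)
      (ENNReal.tendsto_ofReal (tendsto_const_div_atTop_nhds_zero_nat (1 / ε ^ 2)))
      (Or.inr ENNReal.ofNat_ne_top)
    rwa [ENNReal.ofReal_zero, mul_zero] at h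
  exact tendsto_of_tendsto_of_tendsto_of_le_of_le' tendsto_const_nhds hbound
    (Eventually.of_forall fun _ => zero_le)
    ((eventually_ge_atTop 2).mono fun n hn => cond_deviation_le hμ hε hn)

end Measure

end CDG

/-- with `N(ω)` the number of `a ∈ {1,…,n−1}` with `b̃_{a-1} = 0` and `b̃_a = 1`, for every `ε > 0` the conditional probability `μ((5/18 − ε)n < N < (5/18 + ε)n ∣ F_n) → 1` as `n → ∞`. -/
theorem stmt_11 (μ : Measure (ℕ → ℤ)) (hμ : IsCDGProductMeasure μ) (ε : ℝ) (hε : 0 < ε) :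
    Tendsto (fun n : ℕ =>
      μ[|firstOne n] {ω : ℕ → ℤ |
        (5 / 18 - ε) * n <
          (((Finset.Ico 1 n).filter (fun a =>
            btilde n ω (a - 1) = 0 ∧ btilde n ω a = 1)).card : ℝ) ∧
        (((Finset.Ico 1 n).filter (fun a =>
            btilde n ω (a - 1) = 0 ∧ btilde n ω a = 1)).card : ℝ) <
          (5 / 18 + ε) * n})
      atTop (nhds 1) := by
  refine CDG.tendsto_measure_nhds_one_of_compl
    ((eventually_gt_atTop 0).mono fun n hn => CDG.isProbabilityMeasure_cond_firstOne hμ hn) ?_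
  have hwindow : ∀ (n : ℕ) (x : ℝ),
      ((5 / 18 - ε) * n < x ∧ x < (5 / 18 + ε) * n) ↔ |x - 5 / 18 * n| < ε * n := by
    intro n x
    rw [abs_sub_lt_iff]
    constructor <;> rintro ⟨h1, h2⟩ <;> constructor <;> linarith
  convert CDG.tendsto_cond_deviation hμ hε using 3 with n
  ext ω
  simp only [CDG.deviationEvent, Set.mem_compl_iff, Set.mem_ofPred_eq, hwindow, not_lt]
  rfl
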